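/- arXiv:1808.06825 — 7 statements merged into one kernel-verified Lean document; each statement's English description precedes it below -/
import Mathlib

section
/- Let X be a real normed space, f : D → ℝ a continuous convex function on an open set D, and x₀ ∈ D. Then f is Gâteaux differentiable at x₀ if and only if there is a unique continuous linear functional x* with x*(x − x₀) ≤ f(x) − f(x₀) for all x ∈ D; in that case x* equals the Gâteaux derivative of f at x₀. -/
/-!
Write `f'(x₀; v) = lim_{t → 0⁺} (f (x₀ + t v) - f x₀) / t` (`rightLineDeriv f x₀ v`) for the
one-sided directional derivative. For convex `f` and interior `x₀` it always exists, it is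
sublinear in `v`, and it is bounded by `C ‖v‖` because `f` is bounded above near `x₀`.
A continuous linear functional is a subgradient at `x₀` exactly when it lies below `f'(x₀; ·)`,
and `f` is Gâteaux differentiable at `x₀` exactly when `f'(x₀; ·)` is linear. By Hahn–Banach,
every value `f'(x₀; v)` is attained at `v` by some subgradient, so a unique subgradient agrees
with `f'(x₀; ·)` everywhere. Conversely, when `f'(x₀; ·)` is linear, the only linear functional
below it is itself.
-/

open Set Filter Topology Pointwise

noncomputable def rightLineDeriv {X : Type*} [NormedAddCommGroup X] [NormedSpace ℝ X]
    (f : X → ℝ) (x v : X) : ℝ :=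
  derivWithin (fun t : ℝ => f (x + t • v)) (Ioi 0) 0

theorem hasDerivAt_iff_hasDerivWithinAt_Iio_and_Ioi {F : Type*} [NormedAddCommGroup F]
    [NormedSpace ℝ F] {f : ℝ → F} {f' : F} {x : ℝ} :
    HasDerivAt f f' x ↔ HasDerivWithinAt f f' (Iio x) x ∧ HasDerivWithinAt f f' (Ioi x) x := by
  rw [hasDerivAt_iff_tendsto_slope_left_right, hasDerivWithinAt_iff_tendsto_slope' self_notMem_Iio,
    hasDerivWithinAt_iff_tendsto_slope' self_notMem_Ioi]

section Sublinear

theorem apply_zero_of_posHomogeneous {E : Type*} [AddCommGroup E] [Module ℝ E] {p : E → ℝ}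
    (hsmul : ∀ c > (0 : ℝ), ∀ v, p (c • v) = c * p v) : p 0 = 0 := by
  have h := hsmul 2 two_pos 0
  rw [smul_zero] at h
  linarith

theorem exists_linearMap_le_sublinear_eq {E : Type*} [AddCommGroup E] [Module ℝ E] {p : E → ℝ}
    (hsmul : ∀ c > (0 : ℝ), ∀ v, p (c • v) = c * p v) (hadd : ∀ v w, p (v + w) ≤ p v + p w)
    (v₀ : E) : ∃ g : E →ₗ[ℝ] ℝ, (∀ v, g v ≤ p v) ∧ g v₀ = p v₀ := by
  have hzero := apply_zero_of_posHomogeneous hsmul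
  have hneg : -p v₀ ≤ p (-v₀) := by
    have h := hadd v₀ (-v₀)
    rw [add_neg_cancel, hzero] at h
    linarith
  let g₀ : E →ₗ.[ℝ] ℝ := LinearPMap.mkSpanSingleton' v₀ (p v₀) fun c hc => by
    rcases eq_or_ne c 0 with rfl | hc0
    · simp
    · rw [smul_eq_zero_iff_right hc0] at hc
      simp [hc, hzero]
  have hg₀ : ∀ v : g₀.domain, g₀ v ≤ p v := by
    rintro ⟨_, hv⟩
    obtain ⟨c, rfl⟩ := Submodule.mem_span_singleton.1 hv
    show g₀ ⟨c • v₀, hv⟩ ≤ p (c • v₀)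
    rw [LinearPMap.mkSpanSingleton'_apply, RingHom.id_apply, smul_eq_mul]
    rcases lt_trichotomy c 0 with hc | rfl | hc
    · rw [show c • v₀ = (-c) • (-v₀) by rw [neg_smul_neg], hsmul (-c) (by linarith)]
      nlinarith
    · simp [hzero]
    · rw [hsmul c hc]
  obtain ⟨g, hg_ext, hg_le⟩ := exists_extension_of_le_sublinear g₀ p hsmul hadd hg₀
  exact ⟨g, hg_le, (hg_ext ⟨v₀, Submodule.mem_span_singleton_self v₀⟩).trans
    (LinearPMap.mkSpanSingleton'_apply_self _ _ _ _)⟩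

variable {X : Type*} [NormedAddCommGroup X] [NormedSpace ℝ X] {p : X → ℝ}

theorem le_mul_norm_of_le_on_ball (hsmul : ∀ c > (0 : ℝ), ∀ v, p (c • v) = c * p v)
    {δ M : ℝ} (hδ : 0 < δ) (hM : ∀ v, ‖v‖ < δ → p v ≤ M) (v : X) :
    p v ≤ 2 * M / δ * ‖v‖ := by
  rcases eq_or_ne v 0 with rfl | hv
  · simp [apply_zero_of_posHomogeneous hsmul]
  have hv' : 0 < ‖v‖ := norm_pos_iff.2 hv
  set c := δ / (2 * ‖v‖)
  have hc : 0 < c := by positivity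
  have hcv : ‖c • v‖ < δ := by
    rw [norm_smul, Real.norm_of_nonneg hc.le, div_mul_eq_mul_div, mul_div_mul_right _ _ hv'.ne']
    linarith
  have h := hM _ hcv
  rw [hsmul c hc] at h
  calc p v = c⁻¹ * (c * p v) := by field_simp
    _ ≤ c⁻¹ * M := by gcongr
    _ = 2 * M / δ * ‖v‖ := by rw [inv_div]; ring

theorem exists_continuousLinearMap_le_sublinear_eq
    (hsmul : ∀ c > (0 : ℝ), ∀ v, p (c • v) = c * p v) (hadd : ∀ v w, p (v + w) ≤ p v + p w)
    {C : ℝ} (hC : ∀ v, p v ≤ C * ‖v‖) (v₀ : X) :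
    ∃ g : X →L[ℝ] ℝ, (∀ v, g v ≤ p v) ∧ g v₀ = p v₀ := by
  obtain ⟨g, hg_le, hg_eq⟩ := exists_linearMap_le_sublinear_eq hsmul hadd v₀
  have hbound : ∀ v, ‖g v‖ ≤ C * ‖v‖ := fun v => by
    have h := (hg_le (-v)).trans (hC (-v))
    rw [map_neg, norm_neg] at h
    exact abs_le.2 ⟨by linarith, (hg_le v).trans (hC v)⟩
  exact ⟨g.mkContinuous C hbound, hg_le, hg_eq⟩

end Sublinear

section ConvexFunction

variable {X : Type*} [NormedAddCommGroup X] [NormedSpace ℝ X] {D : Set X} {f : X → ℝ} {x₀ : X}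

theorem rightLineDeriv_smul (f : X → ℝ) (x₀ v : X) {c : ℝ} (hc : 0 < c) :
    rightLineDeriv f x₀ (c • v) = c * rightLineDeriv f x₀ v := by
  have h := derivWithin_comp_mul_left c (fun t : ℝ => f (x₀ + t • v)) (Ioi 0) 0
  simp only [LinearOrderedField.smul_Ioi hc, mul_zero, smul_eq_mul] at h
  simp only [rightLineDeriv, smul_smul, ← h, mul_comm]

theorem hasDerivWithinAt_Iio_iff_Ioi_neg (f : X → ℝ) (x₀ v : X) (c : ℝ) :
    HasDerivWithinAt (fun t : ℝ => f (x₀ + t • v)) c (Iio 0) 0 ↔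
      HasDerivWithinAt (fun t : ℝ => f (x₀ + t • -v)) (-c) (Ioi 0) 0 := by
  have h := hasDerivWithinAt_comp_mul_left_smul_iff (c := -1) (f := fun t : ℝ => f (x₀ + t • v))
    (f' := c) (s := Ioi 0) (x := 0)
  simp only [neg_smul_set, one_smul, neg_Ioi, neg_zero, mul_zero, neg_one_mul, neg_smul] at h
  simpa only [smul_neg] using h.symm

theorem convexOn_line (hf : ConvexOn ℝ D f) (x₀ v : X) :
    ConvexOn ℝ {t : ℝ | x₀ + t • v ∈ D} (fun t => f (x₀ + t • v)) :=
  (hf.translate_right x₀).comp_linearMap (LinearMap.toSpanSingleton ℝ X v)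

theorem eventually_mem_line (hD : IsOpen D) (hx₀ : x₀ ∈ D) (v : X) :
    ∀ᶠ t : ℝ in 𝓝 0, x₀ + t • v ∈ D := by
  have hc : Continuous fun t : ℝ => x₀ + t • v := by fun_prop
  exact hc.continuousAt.preimage_mem_nhds (by simpa using hD.mem_nhds hx₀)

theorem hasDerivWithinAt_rightLineDeriv (hf : ConvexOn ℝ D f) (hD : IsOpen D) (hx₀ : x₀ ∈ D)
    (v : X) :
    HasDerivWithinAt (fun t : ℝ => f (x₀ + t • v)) (rightLineDeriv f x₀ v) (Ioi 0) 0 :=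
  (convexOn_line hf x₀ v).hasDerivWithinAt_rightDeriv_of_mem_interior
    (mem_interior_iff_mem_nhds.2 (eventually_mem_line hD hx₀ v))

theorem hasDerivWithinAt_Ioi_iff_rightLineDeriv_eq (hf : ConvexOn ℝ D f) (hD : IsOpen D)
    (hx₀ : x₀ ∈ D) (v : X) (c : ℝ) :
    HasDerivWithinAt (fun t : ℝ => f (x₀ + t • v)) c (Ioi 0) 0 ↔ rightLineDeriv f x₀ v = c :=
  ⟨fun h => h.derivWithin (uniqueDiffWithinAt_Ioi 0),
    fun h => h ▸ hasDerivWithinAt_rightLineDeriv hf hD hx₀ v⟩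

theorem hasDerivAt_line_iff (hf : ConvexOn ℝ D f) (hD : IsOpen D) (hx₀ : x₀ ∈ D) (v : X)
    (c : ℝ) :
    HasDerivAt (fun t : ℝ => f (x₀ + t • v)) c 0 ↔
      rightLineDeriv f x₀ v = c ∧ rightLineDeriv f x₀ (-v) = -c := by
  rw [hasDerivAt_iff_hasDerivWithinAt_Iio_and_Ioi, hasDerivWithinAt_Iio_iff_Ioi_neg,
    hasDerivWithinAt_Ioi_iff_rightLineDeriv_eq hf hD hx₀,
    hasDerivWithinAt_Ioi_iff_rightLineDeriv_eq hf hD hx₀, and_comm]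

theorem tendsto_rightLineDeriv (hf : ConvexOn ℝ D f) (hD : IsOpen D) (hx₀ : x₀ ∈ D) (v : X) :
    Tendsto (fun t : ℝ => (f (x₀ + t • v) - f x₀) / t) (𝓝[>] 0)
      (𝓝 (rightLineDeriv f x₀ v)) := by
  refine ((hasDerivWithinAt_iff_tendsto_slope' self_notMem_Ioi).1
    (hasDerivWithinAt_rightLineDeriv hf hD hx₀ v)).congr fun t => ?_
  simp [slope_def_field]

theorem rightLineDeriv_sub_le (hf : ConvexOn ℝ D f) (hD : IsOpen D) (hx₀ : x₀ ∈ D) {x : X}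
    (hx : x ∈ D) : rightLineDeriv f x₀ (x - x₀) ≤ f x - f x₀ := by
  have h := (convexOn_line hf x₀ (x - x₀)).rightDeriv_le_slope_of_mem_interior
    (mem_interior_iff_mem_nhds.2 (eventually_mem_line hD hx₀ (x - x₀)))
    (by simpa using hx) one_pos
  simpa [slope_def_field, rightLineDeriv] using h

theorem rightLineDeriv_add_le (hf : ConvexOn ℝ D f) (hD : IsOpen D) (hx₀ : x₀ ∈ D) (v w : X) :
    rightLineDeriv f x₀ (v + w) ≤ rightLineDeriv f x₀ v + rightLineDeriv f x₀ w := by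
  have hlim := ((tendsto_rightLineDeriv hf hD hx₀ ((2 : ℝ) • v)).add
    (tendsto_rightLineDeriv hf hD hx₀ ((2 : ℝ) • w))).div_const 2
  rw [rightLineDeriv_smul _ _ _ two_pos, rightLineDeriv_smul _ _ _ two_pos, ← mul_add,
    mul_div_cancel_left₀ _ two_ne_zero] at hlim
  refine le_of_tendsto_of_tendsto (tendsto_rightLineDeriv hf hD hx₀ (v + w)) hlim ?_
  filter_upwards [self_mem_nhdsWithin,
    nhdsWithin_le_nhds (eventually_mem_line hD hx₀ ((2 : ℝ) • v)),
    nhdsWithin_le_nhds (eventually_mem_line hD hx₀ ((2 : ℝ) • w))] with t (ht : 0 < t) hv hw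
  have hmid := hf.2 hv hw (by norm_num : (0 : ℝ) ≤ 1 / 2) (by norm_num : (0 : ℝ) ≤ 1 / 2)
    (by norm_num)
  rw [show (1 / 2 : ℝ) • (x₀ + t • (2 : ℝ) • v) + (1 / 2 : ℝ) • (x₀ + t • (2 : ℝ) • w) =
    x₀ + t • (v + w) by module, smul_eq_mul, smul_eq_mul] at hmid
  field_simp
  linarith

theorem exists_rightLineDeriv_le_mul_norm (hf : ConvexOn ℝ D f) (hD : IsOpen D) (hx₀ : x₀ ∈ D)
    (hcont : ContinuousAt f x₀) : ∃ C, ∀ v, rightLineDeriv f x₀ v ≤ C * ‖v‖ := by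
  have hnear : ∀ᶠ y in 𝓝 x₀, y ∈ D ∧ f y < f x₀ + 1 :=
    (hD.eventually_mem hx₀).and (hcont.eventually (eventually_lt_nhds (lt_add_one (f x₀))))
  obtain ⟨δ, hδ, hball⟩ := Metric.eventually_nhds_iff.1 hnear
  refine ⟨_, le_mul_norm_of_le_on_ball (M := 1) (fun c hc v => rightLineDeriv_smul f x₀ v hc) hδ
    fun u hu => ?_⟩
  obtain ⟨huD, hflt⟩ := hball (y := x₀ + u) (by simpa [dist_eq_norm] using hu)
  have h := rightLineDeriv_sub_le hf hD hx₀ huD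
  rw [add_sub_cancel_left] at h
  linarith

theorem subgradient_iff_le_rightLineDeriv (hf : ConvexOn ℝ D f) (hD : IsOpen D) (hx₀ : x₀ ∈ D)
    (φ : X →L[ℝ] ℝ) :
    (∀ x ∈ D, φ (x - x₀) ≤ f x - f x₀) ↔ ∀ v, φ v ≤ rightLineDeriv f x₀ v := by
  refine ⟨fun hφ v => ge_of_tendsto (tendsto_rightLineDeriv hf hD hx₀ v) ?_,
    fun h x hx => (h _).trans (rightLineDeriv_sub_le hf hD hx₀ hx)⟩
  filter_upwards [self_mem_nhdsWithin, nhdsWithin_le_nhds (eventually_mem_line hD hx₀ v)]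
    with t (ht : 0 < t) htD
  have h := hφ _ htD
  rw [add_sub_cancel_left, map_smul, smul_eq_mul] at h
  rwa [le_div_iff₀ ht, mul_comm]

end ConvexFunction

/-- Let `f : D → ℝ` be a continuous convex function on an open set `D` of a
real normed space and `x₀ ∈ D`. Then `f` is Gâteaux differentiable at `x₀` (i.e. the limit
`lim_{t→0} (f(x₀ + t v) − f(x₀))/t` exists for every direction `v` and is a continuous
linear functional of `v`) if and only if there is a unique continuous linear functional
`x*` with `x*(x − x₀) ≤ f(x) − f(x₀)` for all `x ∈ D`; in that case `x*` equals the
Gâteaux derivative of `f` at `x₀`. -/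
theorem gateaux_differentiable_iff_unique_subgradient
    {X : Type*} [NormedAddCommGroup X] [NormedSpace ℝ X]
    (D : Set X) (hDopen : IsOpen D) (f : X → ℝ) (hconv : ConvexOn ℝ D f)
    (hcont : ContinuousOn f D) (x₀ : X) (hx₀ : x₀ ∈ D) :
    ((∃ xstar : X →L[ℝ] ℝ, ∀ v : X,
        HasDerivAt (fun t : ℝ => f (x₀ + t • v)) (xstar v) 0) ↔
      (∃! xstar : X →L[ℝ] ℝ, ∀ x ∈ D, xstar (x - x₀) ≤ f x - f x₀)) ∧
    (∀ xstar : X →L[ℝ] ℝ,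
      (∀ v : X, HasDerivAt (fun t : ℝ => f (x₀ + t • v)) (xstar v) 0) →
      ∀ x ∈ D, xstar (x - x₀) ≤ f x - f x₀) := by
  have hgateaux (φ : X →L[ℝ] ℝ) :
      (∀ v, HasDerivAt (fun t : ℝ => f (x₀ + t • v)) (φ v) 0) ↔
        ∀ v, rightLineDeriv f x₀ v = φ v := by
    simp only [hasDerivAt_line_iff hconv hDopen hx₀]
    exact ⟨fun h v => (h v).1, fun h v => ⟨h v, (h (-v)).trans (map_neg φ v)⟩⟩
  have hsub := subgradient_iff_le_rightLineDeriv hconv hDopen hx₀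
  have hderiv_sub (φ : X →L[ℝ] ℝ) (hφ : ∀ v, HasDerivAt (fun t : ℝ => f (x₀ + t • v)) (φ v) 0) :
      ∀ x ∈ D, φ (x - x₀) ≤ f x - f x₀ :=
    (hsub φ).2 fun v => ((hgateaux φ).1 hφ v).ge
  refine ⟨⟨fun ⟨φ, hφ⟩ => ⟨φ, hderiv_sub φ hφ, fun ψ hψ => ?_⟩, fun ⟨φ, hφ, huniq⟩ => ?_⟩,
    hderiv_sub⟩
  · have hle : ∀ v, ψ v ≤ φ v := fun v => ((hsub ψ).1 hψ v).trans ((hgateaux φ).1 hφ v).le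
    ext v
    exact le_antisymm (hle v) (by simpa using hle (-v))
  · obtain ⟨C, hC⟩ := exists_rightLineDeriv_le_mul_norm hconv hDopen hx₀
      (hcont.continuousAt (hDopen.mem_nhds hx₀))
    refine ⟨φ, (hgateaux φ).2 fun v => ?_⟩
    obtain ⟨ψ, hψ_le, hψ_eq⟩ := exists_continuousLinearMap_le_sublinear_eq
      (fun c hc v => rightLineDeriv_smul f x₀ v hc) (rightLineDeriv_add_le hconv hDopen hx₀) hC v
    rw [← hψ_eq, huniq ψ ((hsub ψ).2 hψ_le)]
end

section
/- In the setting of the slicing of an open convex set Ω ⊆ X = Y ⊕ ℝh, define g : Ω_h → [−∞, +∞) and f : Ω_h → (−∞, +∞] by Ω_y = (g(y), f(y)). If there exists y₀ ∈ Ω_h with f(y₀) = +∞, then f(y) = +∞ for every y ∈ Ω_h; similarly, if g(y₀) = −∞ for some y₀ ∈ Ω_h, then g ≡ −∞ on Ω_h. -/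
/-!
If `y₀ + t h ∈ Ω` for all large `t` and `x = y + s h ∈ Ω`, openness gives `μ > 0` with
`x + μ (y - y₀) ∈ Ω`; averaging this point with `y₀ + T h` with weights `1 : μ` cancels the
`Y`-components and lands on `y + ((s + μ T) / (1 + μ)) h`, which runs off to `+∞` with `T`.
Replacing `h` by `-h` turns the statement about `g` into the one about `f`.
-/

open Set Filter Topology

section Slice

variable {X : Type*} [AddCommGroup X] [Module ℝ X]

/-- The paper's `Ω_y`. -/
def slice (Ω : Set X) (y h : X) : Set ℝ := {t | y + t • h ∈ Ω}

theorem slice_neg (Ω : Set X) (y h : X) : slice Ω y (-h) = -slice Ω y h := by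
  ext t
  simp [slice, smul_neg, ← neg_smul]

theorem convex_slice {Ω : Set X} (hΩ : Convex ℝ Ω) (y h : X) : Convex ℝ (slice Ω y h) := by
  have : slice Ω y h = AffineMap.lineMap y (y + h) ⁻¹' Ω := by
    ext t
    simp [slice, AffineMap.lineMap_apply, add_comm]
  rw [this]
  exact hΩ.affine_preimage _

theorem Convex.Ici_subset_of_not_bddAbove {S : Set ℝ} (hS : Convex ℝ S) {t₀ : ℝ} (ht₀ : t₀ ∈ S)
    (hub : ¬BddAbove S) : Ici t₀ ⊆ S := fun t ht ↦
  have ⟨_, ht', htt'⟩ := not_bddAbove_iff.1 hub t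
  hS.ordConnected.out ht₀ ht' ⟨ht, htt'.le⟩

theorem Convex.add_div_smul_mem {Ω : Set X} (hΩ : Convex ℝ Ω) {y y₀ h : X} {s T μ : ℝ}
    (hμ : 0 < μ) (hw : y + s • h + μ • (y - y₀) ∈ Ω) (hT : y₀ + T • h ∈ Ω) :
    y + ((s + μ * T) / (1 + μ)) • h ∈ Ω := by
  have hμ' : 0 < 1 + μ := by linarith
  have hcombo : y + ((s + μ * T) / (1 + μ)) • h =
      (1 / (1 + μ)) • (y + s • h + μ • (y - y₀)) + (μ / (1 + μ)) • (y₀ + T • h) := by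
    match_scalars <;> field_simp
    ring
  rw [hcombo]
  exact hΩ hw hT (by positivity) (by positivity) (by field_simp)

variable [TopologicalSpace X] [ContinuousAdd X] [ContinuousSMul ℝ X]

theorem IsOpen.exists_pos_add_smul_mem {Ω : Set X} (hΩ : IsOpen Ω) {x : X} (hx : x ∈ Ω)
    (v : X) : ∃ μ : ℝ, 0 < μ ∧ x + μ • v ∈ Ω := by
  have hcont : Continuous fun μ : ℝ ↦ x + μ • v := by fun_prop
  have : ∀ᶠ μ in 𝓝 (0 : ℝ), x + μ • v ∈ Ω :=
    hcont.continuousAt.preimage_mem_nhds (by simpa using hΩ.mem_nhds hx)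
  exact this.exists_gt

theorem not_bddAbove_slice_of_not_bddAbove_slice {Ω : Set X} (hΩopen : IsOpen Ω)
    (hΩconv : Convex ℝ Ω) {y₀ y h : X} {t₀ s : ℝ}
    (ht₀ : t₀ ∈ slice Ω y₀ h) (hub : ¬BddAbove (slice Ω y₀ h)) (hs : s ∈ slice Ω y h) :
    ¬BddAbove (slice Ω y h) := by
  have hray := (convex_slice hΩconv y₀ h).Ici_subset_of_not_bddAbove ht₀ hub
  obtain ⟨μ, hμ, hw⟩ := hΩopen.exists_pos_add_smul_mem hs (y - y₀)
  rw [not_bddAbove_iff]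
  intro M
  set T := max t₀ (((1 + μ) * M - s) / μ + 1)
  have hTmem : T ∈ slice Ω y₀ h := hray <| mem_Ici.2 <| le_max_left _ _
  refine ⟨(s + μ * T) / (1 + μ), hΩconv.add_div_smul_mem hμ hw hTmem, ?_⟩
  have hT : ((1 + μ) * M - s) / μ + 1 ≤ T := le_max_right _ _
  rw [div_add_one hμ.ne', div_le_iff₀ hμ] at hT
  rw [lt_div_iff₀ (by linarith)]
  linarith

theorem not_bddBelow_slice_of_not_bddBelow_slice {Ω : Set X} (hΩopen : IsOpen Ω)
    (hΩconv : Convex ℝ Ω) {y₀ y h : X} {t₀ s : ℝ}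
    (ht₀ : t₀ ∈ slice Ω y₀ h) (hlb : ¬BddBelow (slice Ω y₀ h)) (hs : s ∈ slice Ω y h) :
    ¬BddBelow (slice Ω y h) := by
  have hmem : ∀ {z : X} {t : ℝ}, t ∈ slice Ω z h → -t ∈ slice Ω z (-h) := fun ht ↦ by
    rwa [slice_neg, Set.neg_mem_neg]
  have := not_bddAbove_slice_of_not_bddAbove_slice hΩopen hΩconv (hmem ht₀)
    (by rwa [slice_neg, bddAbove_neg]) (hmem hs)
  rwa [slice_neg, bddAbove_neg] at this

end Slice

theorem slice_unbounded_propagates_general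
    {X : Type*} [NormedAddCommGroup X] [NormedSpace ℝ X]
    (hstar : X →L[ℝ] ℝ) (h : X)
    (Ω : Set X) (hΩopen : IsOpen Ω) (hΩconv : Convex ℝ Ω) :
    ((∃ y₀ : X, (hstar y₀ = 0 ∧ ∃ t : ℝ, y₀ + t • h ∈ Ω) ∧
        ¬ BddAbove {t : ℝ | y₀ + t • h ∈ Ω}) →
      ∀ y : X, (hstar y = 0 ∧ ∃ t : ℝ, y + t • h ∈ Ω) →
        ¬ BddAbove {t : ℝ | y + t • h ∈ Ω}) ∧
    ((∃ y₀ : X, (hstar y₀ = 0 ∧ ∃ t : ℝ, y₀ + t • h ∈ Ω) ∧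
        ¬ BddBelow {t : ℝ | y₀ + t • h ∈ Ω}) →
      ∀ y : X, (hstar y = 0 ∧ ∃ t : ℝ, y + t • h ∈ Ω) →
        ¬ BddBelow {t : ℝ | y + t • h ∈ Ω}) := by
  constructor
  · rintro ⟨y₀, ⟨-, t₀, ht₀⟩, hub⟩ y ⟨-, s, hs⟩
    exact not_bddAbove_slice_of_not_bddAbove_slice hΩopen hΩconv ht₀ hub hs
  · rintro ⟨y₀, ⟨-, t₀, ht₀⟩, hlb⟩ y ⟨-, s, hs⟩
    exact not_bddBelow_slice_of_not_bddBelow_slice hΩopen hΩconv ht₀ hlb hs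

/-- In the slicing of an open convex set `Ω ⊆ X = Y ⊕ ℝh`
(`Y = ker h*`, `h*(h) = 1`, `Ω_h = {y ∈ Y : ∃ t, y + t h ∈ Ω}`,
`Ω_y = {t : y + t h ∈ Ω} = (g(y), f(y))`): if `f(y₀) = +∞` for some `y₀ ∈ Ω_h`
(i.e. some slice is unbounded above) then `f ≡ +∞` on `Ω_h` (every slice is unbounded
above); similarly if `g(y₀) = −∞` for some `y₀ ∈ Ω_h` then `g ≡ −∞` on `Ω_h`. -/
theorem slice_unbounded_propagates
    {X : Type*} [NormedAddCommGroup X] [NormedSpace ℝ X]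
    (hstar : X →L[ℝ] ℝ) (h : X) (hh : hstar h = 1)
    (Ω : Set X) (hΩopen : IsOpen Ω) (hΩconv : Convex ℝ Ω) :
    ((∃ y₀ : X, (hstar y₀ = 0 ∧ ∃ t : ℝ, y₀ + t • h ∈ Ω) ∧
        ¬ BddAbove {t : ℝ | y₀ + t • h ∈ Ω}) →
      ∀ y : X, (hstar y = 0 ∧ ∃ t : ℝ, y + t • h ∈ Ω) →
        ¬ BddAbove {t : ℝ | y + t • h ∈ Ω}) ∧
    ((∃ y₀ : X, (hstar y₀ = 0 ∧ ∃ t : ℝ, y₀ + t • h ∈ Ω) ∧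
        ¬ BddBelow {t : ℝ | y₀ + t • h ∈ Ω}) →
      ∀ y : X, (hstar y = 0 ∧ ∃ t : ℝ, y + t • h ∈ Ω) →
        ¬ BddBelow {t : ℝ | y + t • h ∈ Ω}) :=
  slice_unbounded_propagates_general hstar h Ω hΩopen hΩconv
end

section
/- Let Ω ⊆ X = Y ⊕ ℝh be open and convex with slices Ω_y = (g(y), f(y)), g finite on Ω_h. Then for every y₀ ∈ Ω_h there exists r₀ > 0 such that g is bounded and Lipschitz continuous on the ball B(y₀, r₀) ∩ Y. -/
/-- Let `Ω ⊆ X = Y ⊕ ℝh` be open convex with slices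
`Ω_y = (g(y), f(y))` and `g(y) = inf {t : y + t h ∈ Ω}` finite on
`Ω_h = {y ∈ Y : ∃ t, y + t h ∈ Ω}`. Then for every `y₀ ∈ Ω_h` there is `r₀ > 0` such
that `g` is bounded and Lipschitz continuous on `B(y₀, r₀) ∩ Y`. -/
theorem lower_slice_locally_bounded_lipschitz
    {X : Type*} [NormedAddCommGroup X] [NormedSpace ℝ X]
    (hstar : X →L[ℝ] ℝ) (h : X) (hh : hstar h = 1)
    (Ω : Set X) (hΩopen : IsOpen Ω) (hΩconv : Convex ℝ Ω)
    (hfin : ∀ y : X, (hstar y = 0 ∧ ∃ t : ℝ, y + t • h ∈ Ω) →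
      BddBelow {t : ℝ | y + t • h ∈ Ω})
    (y₀ : X) (hy₀ : hstar y₀ = 0 ∧ ∃ t : ℝ, y₀ + t • h ∈ Ω) :
    ∃ r₀ > (0 : ℝ),
      (∃ M : ℝ, ∀ y ∈ Metric.ball y₀ r₀ ∩ {y : X | hstar y = 0},
        |sInf {t : ℝ | y + t • h ∈ Ω}| ≤ M) ∧
      (∃ K : NNReal, LipschitzOnWith K (fun y => sInf {t : ℝ | y + t • h ∈ Ω})
        (Metric.ball y₀ r₀ ∩ {y : X | hstar y = 0})) := by
  obtain ⟨hy₀0, t₀, ht₀⟩ := hy₀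
  set F : X → ℝ := fun x => sInf {t : ℝ | x + t • h ∈ Ω} with hF
  -- an open ball around y₀ + t₀ • h inside Ω
  obtain ⟨δ, hδ, hball⟩ := Metric.isOpen_iff.1 hΩopen _ ht₀
  -- membership of the shifted point for x near y₀
  have hmem : ∀ x ∈ Metric.ball y₀ δ, x + t₀ • h ∈ Ω := by
    intro x hx
    apply hball
    simpa [Metric.mem_ball, dist_eq_norm, add_sub_add_right_eq_sub] using hx
  -- bounded below for all x near y₀
  have hbdd : ∀ x ∈ Metric.ball y₀ δ, BddBelow {t : ℝ | x + t • h ∈ Ω} := by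
    intro x hx
    set y := x - (hstar x) • h with hy
    have hy0 : hstar y = 0 := by
      simp [hy, map_sub, map_smul, hh]
    have hyx : ∀ t : ℝ, y + (hstar x + t) • h = x + t • h := by
      intro t
      simp [hy, add_smul]
      abel
    have hyΩ : y + (hstar x + t₀) • h ∈ Ω := by
      rw [hyx]; exact hmem x hx
    obtain ⟨c, hc⟩ := hfin y ⟨hy0, _, hyΩ⟩
    refine ⟨c - hstar x, fun t ht => ?_⟩
    have : (hstar x + t) ∈ {t : ℝ | y + t • h ∈ Ω} := by
      show y + (hstar x + t) • h ∈ Ω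
      rw [hyx]; exact ht
    have := hc this
    linarith
  have hne : ∀ x ∈ Metric.ball y₀ δ, ({t : ℝ | x + t • h ∈ Ω}).Nonempty :=
    fun x hx => ⟨t₀, hmem x hx⟩
  -- F x ≤ t₀ on the ball
  have hub : ∀ x ∈ Metric.ball y₀ δ, F x ≤ t₀ := by
    intro x hx
    exact csInf_le (hbdd x hx) (hmem x hx)
  -- convexity of F on the ball
  have hconv : ConvexOn ℝ (Metric.ball y₀ δ) F := by
    refine ⟨convex_ball _ _, ?_⟩
    intro x hx z hz a b ha hb hab
    have hmid : a • x + b • z ∈ Metric.ball y₀ δ :=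
      (convex_ball y₀ δ) hx hz ha hb hab
    simp only [smul_eq_mul]
    refine le_of_forall_pos_le_add fun ε hε => ?_
    obtain ⟨t₁, ht₁, ht₁'⟩ := Real.lt_sInf_add_pos (hne x hx) hε
    obtain ⟨t₂, ht₂, ht₂'⟩ := Real.lt_sInf_add_pos (hne z hz) hε
    have hcomb : (a • x + b • z) + (a * t₁ + b * t₂) • h ∈ Ω := by
      have := hΩconv ht₁ ht₂ ha hb hab
      convert this using 1
      simp [smul_add, add_smul, smul_smul]
      abel
    have h1 : F (a • x + b • z) ≤ a * t₁ + b * t₂ :=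
      csInf_le (hbdd _ hmid) hcomb
    have h2 : a * t₁ + b * t₂ ≤ a * F x + b * F z + ε := by
      have e1 : a * t₁ ≤ a * (F x + ε) := mul_le_mul_of_nonneg_left ht₁'.le ha
      have e2 : b * t₂ ≤ b * (F z + ε) := mul_le_mul_of_nonneg_left ht₂'.le hb
      nlinarith
    linarith
  -- lower bound on the half ball
  have hlb : ∀ x ∈ Metric.ball y₀ (δ / 2), 2 * F y₀ - t₀ ≤ F x := by
    intro x hx
    set z := y₀ + (y₀ - x) with hz
    have hzball : z ∈ Metric.ball y₀ δ := by
      have : dist z y₀ = dist x y₀ := by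
        simp only [hz, dist_eq_norm]
        rw [norm_sub_rev x y₀]
        congr 1
        abel
      rw [Metric.mem_ball, this]
      exact lt_trans (Metric.mem_ball.1 hx) (by linarith)
    have hxball : x ∈ Metric.ball y₀ δ :=
      Metric.ball_subset_ball (by linarith) hx
    have hy₀ball : y₀ ∈ Metric.ball y₀ δ := Metric.mem_ball_self hδ
    have hcombo : (1/2 : ℝ) • x + (1/2 : ℝ) • z = y₀ := by
      rw [hz]; module
    have := hconv.2 hxball hzball (by norm_num : (0:ℝ) ≤ 1/2)
      (by norm_num : (0:ℝ) ≤ 1/2) (by norm_num)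
    rw [hcombo] at this
    simp only [smul_eq_mul] at this
    have hzub := hub z hzball
    linarith
  -- global bound M on half ball
  set M : ℝ := |t₀| + |2 * F y₀ - t₀| with hM
  have habs : ∀ x ∈ Metric.ball y₀ (δ / 2), |F x| ≤ M := by
    intro x hx
    have h1 := hub x (Metric.ball_subset_ball (by linarith) hx)
    have h2 := hlb x hx
    rw [abs_le]
    constructor
    · have := neg_abs_le (2 * F y₀ - t₀)
      have := abs_nonneg t₀
      simp only [hM]; linarith
    · have := le_abs_self t₀
      have := abs_nonneg (2 * F y₀ - t₀)
      simp only [hM]; linarith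
  -- Lipschitz on the quarter ball
  have hconv' : ConvexOn ℝ (Metric.ball y₀ (δ / 2)) F :=
    hconv.subset (Metric.ball_subset_ball (by linarith)) (convex_ball _ _)
  have hlip := hconv'.lipschitzOnWith_of_abs_le (ε := δ / 4)
    (by linarith) (fun a ha => habs a (Metric.mem_ball.2 ha))
  refine ⟨δ / 4, by linarith, ⟨M, fun y hy => habs y ?_⟩, ⟨_, hlip.mono ?_⟩⟩
  · exact Metric.ball_subset_ball (by linarith) hy.1
  · intro y hy
    have : (δ / 2 - δ / 4) = δ / 4 := by ring
    rw [this]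
    exact hy.1
end

section
/- Let C ⊆ ℝⁿ be an open convex set and x ∈ ∂C. Then the lower density of C at x is positive and the upper density of C at x is at most 1/2; that is, liminf_{ρ→0} |C ∩ B(x,ρ)| / |B(x,ρ)| > 0 and limsup_{ρ→0} |C ∩ B(x,ρ)| / |B(x,ρ)| ≤ 1/2. In particular every point of ∂C has Lebesgue density strictly between 0 and 1, so the measure-theoretic essential boundary of C equals its topological boundary. -/
/-!
Let `x` be a boundary point of the open convex set `C` and `B(y, r) ⊆ C`. For `t ∈ (0, 1]` the
homothety of centre `x` and ratio `t` maps `B(y, r)` into `C`, so `C ∩ B(x, ρ)` contains a ball of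
radius proportional to `ρ` and the lower density is at least `(r / (|x - y| + r))ⁿ`. A supporting
hyperplane at `x` (Hahn–Banach) puts `C ∩ B(x, ρ)` inside an open half-ball, which the point
reflection through `x` maps onto the disjoint opposite half-ball; hence the upper density is at
most `1/2`. Interior points have density `1` and points outside the closure density `0`.
-/

open MeasureTheory Filter Topology Metric Set

section Metric

variable {X : Type*} [PseudoMetricSpace X] [MeasurableSpace X] (μ : Measure X)

theorem tendsto_measure_inter_ball_div_of_mem_interior [ProperSpace X] [μ.IsOpenPosMeasure]
    [IsFiniteMeasureOnCompacts μ] {s : Set X} {x : X}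
    (hx : x ∈ interior s) :
    Tendsto (fun ρ => μ (s ∩ ball x ρ) / μ (ball x ρ)) (𝓝[>] 0) (𝓝 1) := by
  obtain ⟨ε, hε, hball⟩ := isOpen_iff.1 isOpen_interior x hx
  refine tendsto_const_nhds.congr' ?_
  filter_upwards [Ioo_mem_nhdsGT hε] with ρ hρ
  rw [inter_eq_self_of_subset_right ((ball_subset_ball hρ.2.le).trans
    (hball.trans interior_subset)),
    ENNReal.div_self (measure_ball_pos μ x hρ.1).ne' measure_ball_lt_top.ne]

theorem tendsto_measure_inter_ball_div_of_notMem_closure {s : Set X} {x : X}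
    (hx : x ∉ closure s) :
    Tendsto (fun ρ => μ (s ∩ ball x ρ) / μ (ball x ρ)) (𝓝[>] 0) (𝓝 0) := by
  obtain ⟨ε, hε, hball⟩ := isOpen_iff.1 isClosed_closure.isOpen_compl x hx
  refine tendsto_const_nhds.congr' ?_
  filter_upwards [Ioo_mem_nhdsGT hε] with ρ hρ
  have hdisj : Disjoint s (ball x ρ) :=
    (disjoint_compl_right.mono_left subset_closure).mono_right
      ((ball_subset_ball hρ.2.le).trans hball)
  rw [hdisj.inter_eq, measure_empty, ENNReal.zero_div]

end Metric

variable {E : Type*} [NormedAddCommGroup E] [NormedSpace ℝ E]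

theorem Convex.ball_add_smul_sub_subset_interior {s : Set E} (hs : Convex ℝ s) {x y : E}
    (hx : x ∈ closure s) {r t : ℝ} (hr : ball y r ⊆ interior s) (ht : t ∈ Ioc (0 : ℝ) 1) :
    ball (x + t • (y - x)) (t * r) ⊆ interior s := by
  intro z hz
  have ht₀ : t ≠ 0 := ht.1.ne'
  have hw : x + t⁻¹ • (z - x) ∈ ball y r := by
    have hdist : dist (x + t⁻¹ • (z - x)) y = t⁻¹ * dist z (x + t • (y - x)) := by
      have hvec : x + t⁻¹ • (z - x) - y = t⁻¹ • (z - (x + t • (y - x))) := by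
        match_scalars <;> field_simp; ring
      rw [dist_eq_norm, dist_eq_norm, hvec, norm_smul, norm_inv, Real.norm_of_nonneg ht.1.le]
    rw [mem_ball, hdist, inv_mul_lt_iff₀ ht.1]
    exact hz
  simpa [smul_inv_smul₀ ht₀] using hs.add_smul_sub_mem_interior' hx (hr hw) ht

variable [MeasurableSpace E] [BorelSpace E]

theorem two_mul_measure_halfspace_inter_ball_le (μ : Measure E) [μ.IsAddLeftInvariant]
    [μ.IsNegInvariant] (f : E →L[ℝ] ℝ) (x : E) (ρ : ℝ) :
    2 * μ ({z | f z < f x} ∩ ball x ρ) ≤ μ (ball x ρ) := by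
  set A := {z | f z < f x} ∩ ball x ρ
  set A' := {z | f x < f z} ∩ ball x ρ
  have hA' : MeasurableSet A' :=
    ((isOpen_lt continuous_const f.continuous).inter isOpen_ball).measurableSet
  have hreflect : (fun z => (x + x) - z) ⁻¹' A' = A := by
    ext z
    simp only [A, A', mem_preimage, mem_inter_iff, mem_ofPred_eq, mem_ball, dist_eq_norm,
      map_sub, map_add]
    rw [show x + x - z - x = -(z - x) by abel, norm_neg]
    exact and_congr_left' ⟨fun h => by linarith, fun h => by linarith⟩
  have hAA' : μ A = μ A' := by
    rw [← hreflect]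
    exact (Measure.measurePreserving_sub_left μ (x + x)).measure_preimage hA'.nullMeasurableSet
  have hdisj : Disjoint A A' :=
    disjoint_left.2 fun z hz hz' => lt_asymm (α := ℝ) hz.1 hz'.1
  calc 2 * μ A = μ (A ∪ A') := by rw [measure_union hdisj hA', two_mul, hAA']
    _ ≤ μ (ball x ρ) := measure_mono (union_subset inter_subset_right inter_subset_right)

theorem Convex.two_mul_measure_inter_ball_le (μ : Measure E) [μ.IsAddLeftInvariant]
    [μ.IsNegInvariant] {s : Set E} (hs : Convex ℝ s) (hso : IsOpen s) {x : E} (hx : x ∉ s)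
    (ρ : ℝ) : 2 * μ (s ∩ ball x ρ) ≤ μ (ball x ρ) := by
  obtain ⟨f, hf⟩ := geometric_hahn_banach_open_point hs hso hx
  calc 2 * μ (s ∩ ball x ρ) ≤ 2 * μ ({z | f z < f x} ∩ ball x ρ) :=
        by gcongr; exact hf
    _ ≤ μ (ball x ρ) := two_mul_measure_halfspace_inter_ball_le μ f x ρ

variable [FiniteDimensional ℝ E] (μ : Measure E) [μ.IsAddHaarMeasure]

theorem Convex.ofReal_mul_measure_ball_le_measure_inter_ball {s : Set E} (hs : Convex ℝ s)
    {x y : E} (hx : x ∈ closure s) {r : ℝ} (hr : 0 < r) (hball : ball y r ⊆ interior s) {ρ : ℝ}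
    (hρ : ρ ∈ Ioc 0 (dist x y + r)) :
    ENNReal.ofReal ((r / (dist x y + r)) ^ Module.finrank ℝ E) * μ (ball x ρ) ≤
      μ (s ∩ ball x ρ) := by
  set t := ρ / (dist x y + r)
  have hDr : 0 < dist x y + r := by positivity
  have ht : t ∈ Ioc (0 : ℝ) 1 := ⟨div_pos hρ.1 hDr, (div_le_one hDr).2 hρ.2⟩
  set c := x + t • (y - x)
  have hc : dist c x = t * dist x y := by
    rw [dist_eq_norm, add_sub_cancel_left, norm_smul, Real.norm_of_nonneg ht.1.le,
      dist_eq_norm']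
  have hsub : ball c (t * r) ⊆ s ∩ ball x ρ := by
    refine subset_inter ((hs.ball_add_smul_sub_subset_interior hx hball ht).trans
      interior_subset) (ball_subset_ball' ?_)
    rw [hc, ← mul_add, add_comm r, div_mul_cancel₀ _ hDr.ne']
  calc ENNReal.ofReal ((r / (dist x y + r)) ^ Module.finrank ℝ E) * μ (ball x ρ)
      = μ (ball c (t * r)) := by
        rw [show t * r = r / (dist x y + r) * ρ by ring,
          Measure.addHaar_ball_mul_of_pos μ _ (div_pos hr hDr),
          Measure.addHaar_ball_center μ x, Measure.addHaar_ball_center μ]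
    _ ≤ μ (s ∩ ball x ρ) := measure_mono hsub

theorem Convex.liminf_measure_inter_ball_div_pos {s : Set E} (hs : Convex ℝ s)
    (hint : (interior s).Nonempty) {x : E} (hx : x ∈ closure s) :
    0 < liminf (fun ρ => μ (s ∩ ball x ρ) / μ (ball x ρ)) (𝓝[>] 0) := by
  obtain ⟨y, hy⟩ := hint
  obtain ⟨r, hr, hball⟩ := isOpen_iff.1 isOpen_interior y hy
  refine (ENNReal.ofReal_pos.2
    (by positivity : (0 : ℝ) < (r / (dist x y + r)) ^ Module.finrank ℝ E)).trans_le
    (le_liminf_of_le (by isBoundedDefault) ?_)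
  filter_upwards [Ioc_mem_nhdsGT (by positivity : (0 : ℝ) < dist x y + r)] with ρ hρ
  rw [ENNReal.le_div_iff_mul_le (Or.inl (measure_ball_pos μ x hρ.1).ne')
    (Or.inl measure_ball_lt_top.ne)]
  exact hs.ofReal_mul_measure_ball_le_measure_inter_ball μ hx hr hball hρ

theorem Convex.limsup_measure_inter_ball_div_le_half {s : Set E} (hs : Convex ℝ s)
    (hso : IsOpen s) {x : E} (hx : x ∉ s) :
    limsup (fun ρ => μ (s ∩ ball x ρ) / μ (ball x ρ)) (𝓝[>] 0) ≤ 1 / 2 := by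
  refine limsup_le_of_le (by isBoundedDefault) (Eventually.of_forall fun ρ => ?_)
  rw [one_div]
  exact ENNReal.div_le_of_le_mul <|
    (ENNReal.mul_le_iff_le_inv two_ne_zero ENNReal.ofNat_ne_top).1
      (hs.two_mul_measure_inter_ball_le μ hso hx ρ)

theorem open_convex_boundary_density_bounds_general {n : ℕ}
    (C : Set (EuclideanSpace ℝ (Fin n))) (hCopen : IsOpen C) (hCconv : Convex ℝ C) :
    (∀ x ∈ frontier C,
      0 < liminf (fun ρ : ℝ =>
          volume (C ∩ Metric.ball x ρ) / volume (Metric.ball x ρ)) (𝓝[>] 0) ∧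
      limsup (fun ρ : ℝ =>
          volume (C ∩ Metric.ball x ρ) / volume (Metric.ball x ρ)) (𝓝[>] 0)
        ≤ 1 / 2) ∧
    frontier C = {x : EuclideanSpace ℝ (Fin n) |
      ¬ Tendsto (fun ρ : ℝ =>
          volume (C ∩ Metric.ball x ρ) / volume (Metric.ball x ρ)) (𝓝[>] 0) (𝓝 0) ∧
      ¬ Tendsto (fun ρ : ℝ =>
          volume (C ∩ Metric.ball x ρ) / volume (Metric.ball x ρ)) (𝓝[>] 0) (𝓝 1)} := by
  have bounds : ∀ x ∈ frontier C,
      0 < liminf (fun ρ : ℝ => volume (C ∩ ball x ρ) / volume (ball x ρ)) (𝓝[>] 0) ∧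
      limsup (fun ρ : ℝ => volume (C ∩ ball x ρ) / volume (ball x ρ)) (𝓝[>] 0) ≤ 1 / 2 := by
    intro x hx
    rw [hCopen.frontier_eq] at hx
    have hint : (interior C).Nonempty := by
      rw [hCopen.interior_eq]
      exact closure_nonempty_iff.1 ⟨x, hx.1⟩
    exact ⟨hCconv.liminf_measure_inter_ball_div_pos volume hint hx.1,
      hCconv.limsup_measure_inter_ball_div_le_half volume hCopen hx.2⟩
  refine ⟨bounds, Set.ext fun x => ⟨fun hx => ?_, fun ⟨h0, h1⟩ => ?_⟩⟩
  · obtain ⟨hpos, hhalf⟩ := bounds x hx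
    refine ⟨fun h => (h.liminf_eq ▸ hpos).false, fun h => ?_⟩
    rw [h.limsup_eq] at hhalf
    norm_num at hhalf
  · by_contra hx
    rw [frontier, Set.mem_sdiff, not_and_or, not_not] at hx
    rcases hx with hcl | hint
    · exact h0 (tendsto_measure_inter_ball_div_of_notMem_closure volume hcl)
    · exact h1 (tendsto_measure_inter_ball_div_of_mem_interior volume hint)

/-- Let `C ⊆ ℝⁿ` be a nonempty open convex set and `x ∈ ∂C`. Then the
lower density of `C` at `x` is positive and the upper density is at most `1/2`:
`liminf_{ρ→0⁺} |C ∩ B(x,ρ)|/|B(x,ρ)| > 0` and `limsup_{ρ→0⁺} |C ∩ B(x,ρ)|/|B(x,ρ)| ≤ 1/2`.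
In particular every boundary point has Lebesgue density neither `0` nor `1`, so the
measure-theoretic essential boundary of `C` coincides with its topological boundary. -/
theorem open_convex_boundary_density_bounds {n : ℕ}
    (C : Set (EuclideanSpace ℝ (Fin n))) (hCopen : IsOpen C) (hCconv : Convex ℝ C)
    (hCne : C.Nonempty) :
    (∀ x ∈ frontier C,
      0 < liminf (fun ρ : ℝ =>
          volume (C ∩ Metric.ball x ρ) / volume (Metric.ball x ρ)) (𝓝[>] 0) ∧
      limsup (fun ρ : ℝ =>
          volume (C ∩ Metric.ball x ρ) / volume (Metric.ball x ρ)) (𝓝[>] 0)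
        ≤ 1 / 2) ∧
    frontier C = {x : EuclideanSpace ℝ (Fin n) |
      ¬ Tendsto (fun ρ : ℝ =>
          volume (C ∩ Metric.ball x ρ) / volume (Metric.ball x ρ)) (𝓝[>] 0) (𝓝 0) ∧
      ¬ Tendsto (fun ρ : ℝ =>
          volume (C ∩ Metric.ball x ρ) / volume (Metric.ball x ρ)) (𝓝[>] 0) (𝓝 1)} :=
  open_convex_boundary_density_bounds_general C hCopen hCconv
end

section
/- Let X = Y ⊕ ℝh as above, Ω ⊆ X open convex with 0 ∈ Ω and Minkowski functional p, and let f : Ω_h → ℝ be the finite concave upper-slice function, so Γ(f) = {y + f(y)h : y ∈ Ω_h} ⊆ ∂Ω. Suppose x₀ = y₀ + f(y₀)h with f Gâteaux differentiable at y₀, and let x* ∈ ∂p(x₀). Then x*(h) > 0. -/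
/-- Setting: `X = Y ⊕ ℝh` with `Y = ker h*`, `h*(h) = 1`; `Ω ⊆ X` open
convex with `0 ∈ Ω` and Minkowski functional `p = gauge Ω`; `f(y) = sup {t : y + t h ∈ Ω}`
is the finite concave upper-slice function on `Ω_h`, so that
`Γ(f) = {y + f(y) h : y ∈ Ω_h} ⊆ ∂Ω`. Suppose `x₀ = y₀ + f(y₀) h` with `f` Gâteaux
differentiable at `y₀ ∈ Ω_h` (in the directions of `Y`), and let `x* ∈ ∂p(x₀)`,
i.e. `x*(x − x₀) ≤ p(x) − p(x₀)` for all `x`. Then `x*(h) > 0`. -/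
theorem subgradient_of_gauge_positive_on_h
    {X : Type*} [NormedAddCommGroup X] [NormedSpace ℝ X]
    (hstar : X →L[ℝ] ℝ) (h : X) (hh : hstar h = 1)
    (Ω : Set X) (hΩopen : IsOpen Ω) (hΩconv : Convex ℝ Ω) (h0 : (0 : X) ∈ Ω)
    (hfin : ∀ y : X, (hstar y = 0 ∧ ∃ t : ℝ, y + t • h ∈ Ω) →
      BddAbove {t : ℝ | y + t • h ∈ Ω})
    (y₀ : X) (hy₀ : hstar y₀ = 0 ∧ ∃ t : ℝ, y₀ + t • h ∈ Ω)
    (L : X →L[ℝ] ℝ)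
    (hGateaux : ∀ v : X, hstar v = 0 →
      HasDerivAt (fun t : ℝ => sSup {s : ℝ | (y₀ + t • v) + s • h ∈ Ω}) (L v) 0)
    (xstar : X →L[ℝ] ℝ)
    (hsub : ∀ x : X,
      xstar (x - (y₀ + sSup {t : ℝ | y₀ + t • h ∈ Ω} • h)) ≤
        gauge Ω x - gauge Ω (y₀ + sSup {t : ℝ | y₀ + t • h ∈ Ω} • h)) :
    0 < xstar h := by
  set S : Set ℝ := {t : ℝ | y₀ + t • h ∈ Ω} with hS
  set f : ℝ := sSup S with hf
  obtain ⟨t₀, ht₀⟩ := hy₀.2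
  have hbdd : BddAbove S := hfin y₀ hy₀
  have hne : S.Nonempty := ⟨t₀, ht₀⟩
  -- S is open
  have hSopen : IsOpen S := by
    have : Continuous fun t : ℝ => y₀ + t • h := by continuity
    exact hΩopen.preimage this
  -- f ∉ S
  have hfnot : f ∉ S := by
    intro hfS
    obtain ⟨ε, hε, hball⟩ := Metric.isOpen_iff.1 hSopen f hfS
    have : f + ε / 2 ∈ S := by
      apply hball
      rw [Metric.mem_ball, Real.dist_eq, show f + ε/2 - f = ε/2 by ring,
        abs_of_pos (by linarith)]
      linarith
    have := le_csSup hbdd this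
    linarith
  -- t₀ < f
  have ht₀f : t₀ < f := lt_of_le_of_ne (le_csSup hbdd ht₀) (fun hEq => hfnot (hEq ▸ ht₀))
  -- gauge of x = y₀ + t₀ • h is < 1
  have hg1 : gauge Ω (y₀ + t₀ • h) < 1 := gauge_lt_one_of_mem_of_isOpen hΩopen ht₀
  -- gauge of x₀ is ≥ 1
  have hg2 : (1:ℝ) ≤ gauge Ω (y₀ + f • h) := by
    by_contra hlt
    push_neg at hlt
    have := gauge_lt_one_eq_self_of_isOpen hΩconv h0 hΩopen
    have : y₀ + f • h ∈ Ω := by rw [← this]; exact hlt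
    exact hfnot this
  have key := hsub (y₀ + t₀ • h)
  have heq : (y₀ + t₀ • h) - (y₀ + f • h) = (t₀ - f) • h := by
    rw [sub_smul]; abel
  rw [heq, map_smul] at key
  have hneg : (t₀ - f) * xstar h < 0 := lt_of_le_of_lt key (by linarith)
  nlinarith [hneg, ht₀f]
end

section
/- Let X = Y ⊕ ℝh, Ω ⊆ X open convex with 0 ∈ Ω, p its Minkowski functional, and f : Ω_h → ℝ the finite concave upper-slice function with graph Γ(f) ⊆ ∂Ω. If f is Gâteaux differentiable at y₀ ∈ Ω_h and x₀ = y₀ + f(y₀) h, then p is Gâteaux differentiable at x₀ and its Gâteaux derivative is the functional x ↦ ((−D_G f(y₀))(y) + t) / ((−D_G f(y₀))(y₀) + f(y₀)), where x = y + t h with y ∈ Y, t = h*(x). -/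
/-!
Write `x = y + t • h` with `hstar y = 0`, let `f = sliceSup Ω h`, `t₀ = f y₀` and
`φ (y + t • h) = t - L y`. Concavity of `f` and its derivative at `y₀` give
`f y ≤ t₀ + L (y - y₀)`, i.e. `φ ≤ M := t₀ - L y₀` on `Ω`; as `0 ∈ interior Ω` and `φ h = 1`,
`M > 0`. So `φ / M` is a linear minorant of the gauge `p` with `p x₀ = 1` (`x₀` lies on `∂Ω`),
whence `p (x₀ + s • v) ≥ 1 + s * φ v / M`. Conversely, for any slope `κ` rescale
`(x₀ + s • v) / (1 + κ * s) = y(s) + τ(s) • h`; the function `s ↦ f (y s) - τ s` vanishes at `0`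
with derivative `M * (κ - φ v / M)`, so when `κ - φ v / M` and `s` have the same sign and `s` is
small the rescaled point lies in `Ω`, i.e. `p (x₀ + s • v) ≤ 1 + κ * s`.
-/

open Filter Set Topology

theorem HasDerivAt.le_of_eventually_add_mul_le {F : ℝ → ℝ} {D a : ℝ} (hF : HasDerivAt F D 0)
    (h : ∀ᶠ θ in 𝓝[>] 0, F 0 + a * θ ≤ F θ) : a ≤ D := by
  refine ge_of_tendsto hF.tendsto_slope_zero_right ?_
  filter_upwards [h, self_mem_nhdsWithin] with θ hθ (hθ₀ : 0 < θ)
  rw [zero_add, smul_eq_mul, le_inv_mul_iff₀ hθ₀]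
  linarith

theorem HasDerivAt.eventually_pos_of_mul_pos {G : ℝ → ℝ} {D : ℝ} (hG : HasDerivAt G D 0)
    (h₀ : G 0 = 0) : ∀ᶠ s in 𝓝[≠] 0, 0 < D * s → 0 < G s := by
  rcases eq_or_ne D 0 with rfl | hD
  · exact Eventually.of_forall fun s hs => by simp at hs
  have hslope : ∀ᶠ s in 𝓝[≠] 0, 0 < D * (s⁻¹ * G s) := by
    have := (hG.tendsto_slope_zero.const_mul D).eventually
      (eventually_gt_nhds (mul_self_pos.2 hD))
    simpa [h₀] using this
  filter_upwards [hslope] with s hs hDs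
  have hs₀ : s ≠ 0 := by rintro rfl; simp at hDs
  have : D * (s⁻¹ * G s) * (D * s) = D ^ 2 * G s := by field_simp
  exact pos_of_mul_pos_right (this ▸ mul_pos hs hDs) (sq_nonneg D)

theorem hasDerivAt_of_le_of_eventually_le {g : ℝ → ℝ} {c : ℝ}
    (hlow : ∀ s, g 0 + c * s ≤ g s)
    (hup : ∀ κ, ∀ᶠ s in 𝓝[≠] 0, 0 < (κ - c) * s → g s ≤ g 0 + κ * s) :
    HasDerivAt g c 0 := by
  rw [hasDerivAt_iff_isLittleO, Asymptotics.isLittleO_iff]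
  intro ε hε
  filter_upwards [eventually_nhdsWithin_iff.1 (hup (c + ε)),
    eventually_nhdsWithin_iff.1 (hup (c - ε))] with s hright hleft
  simp only [sub_zero, smul_eq_mul, Real.norm_eq_abs]
  have := hlow s
  rcases lt_trichotomy s 0 with hs | rfl | hs
  · have := hleft hs.ne (by nlinarith)
    rw [abs_of_nonneg (by nlinarith), abs_of_neg hs]
    nlinarith
  · simp
  · have := hright hs.ne' (by nlinarith)
    rw [abs_of_nonneg (by nlinarith), abs_of_pos hs]
    nlinarith

theorem HasDerivAt.comp_div_one_add_mul_sub {F : ℝ → ℝ} {D : ℝ} (hF : HasDerivAt F D 0)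
    (t c κ : ℝ) :
    HasDerivAt (fun s => F (s / (1 + κ * s)) - (t + s * c) / (1 + κ * s))
      (D - (c - κ * t)) 0 := by
  have hden : HasDerivAt (fun s : ℝ => 1 + κ * s) κ 0 := by
    simpa using ((hasDerivAt_id (0 : ℝ)).const_mul κ).const_add 1
  have hq : HasDerivAt (fun s : ℝ => s / (1 + κ * s)) 1 0 := by
    simpa using (hasDerivAt_id' (0 : ℝ)).fun_div hden (by simp)
  have hτ : HasDerivAt (fun s => (t + s * c) / (1 + κ * s)) (c - κ * t) 0 := by
    have := (((hasDerivAt_id' (0 : ℝ)).mul_const c).const_add t).fun_div hden (by simp)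
    simp only [mul_zero, add_zero, zero_mul, one_pow, div_one, one_mul, mul_one] at this
    rwa [mul_comm t κ] at this
  have hFq : HasDerivAt (fun s => F (s / (1 + κ * s))) D 0 := by
    have := HasDerivAt.scomp (0 : ℝ) (by simpa using hF) hq
    rwa [one_smul] at this
  exact hFq.sub hτ

section Slices

variable {X : Type*} [AddCommGroup X] [Module ℝ X] {Ω : Set X}

/-- The upper-slice function `f` of `Ω` along `h`; it is `0` when the slice is empty or
unbounded. -/
noncomputable def sliceSup (Ω : Set X) (h y : X) : ℝ := sSup {t : ℝ | y + t • h ∈ Ω}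

theorem Convex.preimage_add_smul (hΩ : Convex ℝ Ω) (y h : X) :
    Convex ℝ {t : ℝ | y + t • h ∈ Ω} := by
  have : {t : ℝ | y + t • h ∈ Ω} = AffineMap.lineMap y (y + h) ⁻¹' Ω := by
    ext t; simp [AffineMap.lineMap_apply, add_comm]
  exact this ▸ hΩ.affine_preimage _

theorem Convex.add_smul_combo_mem (hΩ : Convex ℝ Ω) {y w h : X} {a b θ : ℝ}
    (hθ₀ : 0 ≤ θ) (hθ₁ : θ ≤ 1) (ha : y + a • h ∈ Ω) (hb : (y + w) + b • h ∈ Ω) :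
    (y + θ • w) + ((1 - θ) * a + θ * b) • h ∈ Ω := by
  convert hΩ ha hb (sub_nonneg.2 hθ₁) hθ₀ (sub_add_cancel 1 θ) using 1
  module

theorem Convex.le_sliceSup_add_of_hasDerivAt (hΩ : Convex ℝ Ω) {y w h : X} {b D : ℝ}
    (hne : {t : ℝ | y + t • h ∈ Ω}.Nonempty)
    (hbdd : ∀ θ : ℝ, BddAbove {t : ℝ | (y + θ • w) + t • h ∈ Ω})
    (hD : HasDerivAt (fun θ : ℝ => sliceSup Ω h (y + θ • w)) D 0)
    (hb : (y + w) + b • h ∈ Ω) : b ≤ sliceSup Ω h y + D := by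
  suffices b - sliceSup Ω h y ≤ D by linarith
  refine hD.le_of_eventually_add_mul_le ?_
  filter_upwards [Ioo_mem_nhdsGT zero_lt_one] with θ ⟨hθ₀, hθ₁⟩
  simp only [zero_smul, add_zero]
  have hsup : sliceSup Ω h y ≤ (sliceSup Ω h (y + θ • w) - θ * b) / (1 - θ) := by
    refine csSup_le hne fun a ha => ?_
    have : (1 - θ) * a + θ * b ≤ sliceSup Ω h (y + θ • w) :=
      le_csSup (hbdd θ) (hΩ.add_smul_combo_mem hθ₀.le hθ₁.le ha hb)
    rw [le_div_iff₀ (by linarith)]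
    linarith
  rw [le_div_iff₀ (by linarith)] at hsup
  linarith

theorem le_gauge_of_forall_mem_le_one (hΩ : Absorbent ℝ Ω) (ℓ : X →ₗ[ℝ] ℝ)
    (hℓ : ∀ x ∈ Ω, ℓ x ≤ 1) (x : X) : ℓ x ≤ gauge Ω x := by
  refine le_csInf hΩ.gauge_set_nonempty ?_
  rintro r ⟨hr, z, hz, rfl⟩
  rw [map_smul, smul_eq_mul]
  exact mul_le_of_le_one_right hr.le (hℓ z hz)

theorem one_add_mul_le_gauge_add_smul (hΩ : Absorbent ℝ Ω) (ℓ : X →ₗ[ℝ] ℝ) {M : ℝ}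
    (hM : 0 < M) (hℓ : ∀ x ∈ Ω, ℓ x ≤ M) {x₀ : X} (hx₀ : ℓ x₀ = M) (v : X) (s : ℝ) :
    1 + ℓ v / M * s ≤ gauge Ω (x₀ + s • v) := by
  have := le_gauge_of_forall_mem_le_one hΩ (M⁻¹ • ℓ)
    (fun x hx => by simpa [inv_mul_le_one₀ hM] using hℓ x hx) (x₀ + s • v)
  convert this using 1
  simp only [LinearMap.smul_apply, map_add, map_smul, hx₀, smul_eq_mul]
  field_simp

theorem gauge_smul_le_of_lt_sliceSup (hΩ : Convex ℝ Ω) {y h : X} {a t r : ℝ} (hr : 0 < r)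
    (ha : y + a • h ∈ Ω) (hat : a ≤ t) (ht : t < sliceSup Ω h y) :
    gauge Ω (r • (y + t • h)) ≤ r := by
  obtain ⟨b, hb, htb⟩ := exists_lt_of_lt_csSup ⟨a, ha⟩ ht
  have hmem : y + t • h ∈ Ω := (hΩ.preimage_add_smul y h).ordConnected.out ha hb ⟨hat, htb.le⟩
  exact gauge_le_of_mem hr.le (smul_mem_smul_set hmem)

variable [TopologicalSpace X] [IsTopologicalAddGroup X] [ContinuousSMul ℝ X]

theorem IsOpen.exists_gt_add_smul_mem (hΩ : IsOpen Ω) {y h : X} {a : ℝ}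
    (ha : y + a • h ∈ Ω) : ∃ b, a < b ∧ y + b • h ∈ Ω := by
  have : IsOpen {t : ℝ | y + t • h ∈ Ω} := hΩ.preimage (by fun_prop)
  exact ((frequently_gt_nhds a).and_eventually (this.mem_nhds ha)).exists

theorem gauge_add_sliceSup_smul_le_one (hΩ : Convex ℝ Ω) (hΩ0 : Ω ∈ 𝓝 0) {y h : X}
    (hne : {t : ℝ | y + t • h ∈ Ω}.Nonempty) (hbdd : BddAbove {t : ℝ | y + t • h ∈ Ω}) :
    gauge Ω (y + sliceSup Ω h y • h) ≤ 1 :=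
  (gauge_le_one_iff_mem_closure hΩ hΩ0).2 <| map_mem_closure (f := fun t : ℝ => y + t • h)
    (by fun_prop) (csSup_mem_closure hne hbdd) fun _ ht => ht

theorem IsOpen.lt_sliceSup (hΩ : IsOpen Ω) {y h : X} {a : ℝ}
    (hbdd : BddAbove {t : ℝ | y + t • h ∈ Ω}) (ha : y + a • h ∈ Ω) : a < sliceSup Ω h y := by
  obtain ⟨b, hab, hb⟩ := hΩ.exists_gt_add_smul_mem ha
  exact hab.trans_le (le_csSup hbdd hb)

theorem eventually_gauge_le_of_lt_sliceSup (hΩo : IsOpen Ω) (hΩ : Convex ℝ Ω) {y₀ h u : X}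
    {a t₀ c κ : ℝ} (ha : y₀ + a • h ∈ Ω) (hat : a < t₀) :
    ∀ᶠ s in 𝓝 0,
      (t₀ + s * c) / (1 + κ * s) < sliceSup Ω h (y₀ + (s / (1 + κ * s)) • (u - κ • y₀)) →
      gauge Ω ((y₀ + t₀ • h) + s • (u + c • h)) ≤ 1 + κ * s := by
  have hden : ContinuousAt (fun s : ℝ => 1 + κ * s) 0 := by fun_prop
  have hq : ContinuousAt (fun s : ℝ => s / (1 + κ * s)) 0 := continuousAt_id.div hden (by simp)
  have hτ : ContinuousAt (fun s : ℝ => (t₀ + s * c) / (1 + κ * s)) 0 :=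
    (by fun_prop : ContinuousAt (fun s : ℝ => t₀ + s * c) 0).div hden (by simp)
  have hpos : ∀ᶠ s in 𝓝 0, 0 < 1 + κ * s := continuousAt_const.eventually_lt hden (by simp)
  have hlower : ∀ᶠ s in 𝓝 0, a < (t₀ + s * c) / (1 + κ * s) :=
    continuousAt_const.eventually_lt hτ (by simpa using hat)
  have hmem : ∀ᶠ s in 𝓝 0, (y₀ + (s / (1 + κ * s)) • (u - κ • y₀)) + a • h ∈ Ω :=
    (continuousAt_const.add (hq.smul continuousAt_const)).add continuousAt_const |>.eventually_mem
      (hΩo.mem_nhds (by simpa using ha))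
  filter_upwards [hpos, hlower, hmem] with s hs hlower hmem hlt
  have hx : (y₀ + t₀ • h) + s • (u + c • h) = (1 + κ * s) •
      ((y₀ + (s / (1 + κ * s)) • (u - κ • y₀)) + ((t₀ + s * c) / (1 + κ * s)) • h) := by
    simp only [smul_add, smul_smul, mul_div_cancel₀ _ hs.ne']
    module
  rw [hx]
  exact gauge_smul_le_of_lt_sliceSup hΩ hs hmem hlower.le hlt

theorem eventually_gauge_le_of_hasDerivAt (hΩo : IsOpen Ω) (hΩ : Convex ℝ Ω) {y₀ h u : X}
    {a c κ D : ℝ} (ha : y₀ + a • h ∈ Ω) (hat : a < sliceSup Ω h y₀)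
    (hD : HasDerivAt (fun θ : ℝ => sliceSup Ω h (y₀ + θ • (u - κ • y₀))) D 0) :
    ∀ᶠ s in 𝓝[≠] 0, 0 < (D - (c - κ * sliceSup Ω h y₀)) * s →
      gauge Ω ((y₀ + sliceSup Ω h y₀ • h) + s • (u + c • h)) ≤ 1 + κ * s := by
  filter_upwards [(hD.comp_div_one_add_mul_sub (sliceSup Ω h y₀) c κ).eventually_pos_of_mul_pos
      (by simp), nhdsWithin_le_nhds (eventually_gauge_le_of_lt_sliceSup hΩo hΩ ha hat)]
    with s hpos hle hDs
  exact hle (sub_pos.1 (hpos hDs))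

end Slices

section TangentFunctional

variable {X : Type*} [AddCommGroup X] [Module ℝ X] [TopologicalSpace X]
  [IsTopologicalAddGroup X] [ContinuousSMul ℝ X] {Ω : Set X} {hstar L : X →L[ℝ] ℝ} {h y₀ : X}

def tangentFunctional (hstar L : X →L[ℝ] ℝ) (h : X) : X →L[ℝ] ℝ :=
  hstar - L ∘L (ContinuousLinearMap.id ℝ X - hstar.smulRight h)

@[simp]
theorem tangentFunctional_apply (hstar L : X →L[ℝ] ℝ) (h x : X) :
    tangentFunctional hstar L h x = hstar x - L (x - hstar x • h) := rfl

theorem tangentFunctional_add_smul (L : X →L[ℝ] ℝ) (hh : hstar h = 1) {y : X}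
    (hy : hstar y = 0) (t : ℝ) : tangentFunctional hstar L h (y + t • h) = t - L y := by
  simp [hh, hy]

theorem Convex.tangentFunctional_le (hΩ : Convex ℝ Ω) (hh : hstar h = 1) (hy₀ : hstar y₀ = 0)
    (hne : {t : ℝ | y₀ + t • h ∈ Ω}.Nonempty)
    (hbdd : ∀ y, hstar y = 0 → BddAbove {t : ℝ | y + t • h ∈ Ω})
    (hL : ∀ w, hstar w = 0 → HasDerivAt (fun θ : ℝ => sliceSup Ω h (y₀ + θ • w)) (L w) 0)
    {x : X} (hx : x ∈ Ω) : tangentFunctional hstar L h x ≤ sliceSup Ω h y₀ - L y₀ := by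
  set w := x - hstar x • h - y₀
  have hw : hstar w = 0 := by simp [w, hh, hy₀]
  have hxw : (y₀ + w) + hstar x • h = x := by simp only [w]; abel
  have := hΩ.le_sliceSup_add_of_hasDerivAt hne (fun θ => hbdd _ (by simp [hy₀, hw])) (hL w hw)
    (hxw.symm ▸ hx)
  rw [tangentFunctional_apply, map_sub]
  simp only [w, map_sub] at this
  linarith

theorem IsOpen.pos_of_forall_tangentFunctional_le (hΩ : IsOpen Ω) (h0 : (0 : X) ∈ Ω)
    (hh : hstar h = 1) {M : ℝ} (hle : ∀ x ∈ Ω, tangentFunctional hstar L h x ≤ M) : 0 < M := by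
  obtain ⟨ε, hε, hεΩ⟩ := hΩ.exists_gt_add_smul_mem (y := 0) (h := h) (a := 0) (by simpa using h0)
  have := hle _ hεΩ
  rw [tangentFunctional_add_smul L hh (map_zero hstar), map_zero, sub_zero] at this
  linarith

theorem eventually_gauge_le_of_tangentFunctional (hΩo : IsOpen Ω) (hΩ : Convex ℝ Ω)
    (hh : hstar h = 1) (hy₀ : hstar y₀ = 0) {a : ℝ} (ha : y₀ + a • h ∈ Ω)
    (hat : a < sliceSup Ω h y₀) (hM : 0 < sliceSup Ω h y₀ - L y₀)
    (hL : ∀ w, hstar w = 0 → HasDerivAt (fun θ : ℝ => sliceSup Ω h (y₀ + θ • w)) (L w) 0)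
    (v : X) (κ : ℝ) :
    ∀ᶠ s in 𝓝[≠] 0,
      0 < (κ - tangentFunctional hstar L h v / (sliceSup Ω h y₀ - L y₀)) * s →
      gauge Ω ((y₀ + sliceSup Ω h y₀ • h) + s • v) ≤ 1 + κ * s := by
  have hw : hstar (v - hstar v • h - κ • y₀) = 0 := by simp [hh, hy₀]
  filter_upwards [eventually_gauge_le_of_hasDerivAt hΩo hΩ (c := hstar v) ha hat (hL _ hw)]
    with s hle hs
  rw [sub_add_cancel] at hle
  refine hle ((mul_pos hM hs).trans_eq ?_)
  simp only [tangentFunctional_apply, map_sub, map_smul, smul_eq_mul]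
  field_simp
  ring

end TangentFunctional

/-- Setting: `X = Y ⊕ ℝh` with `Y = ker h*`, `h*(h) = 1`; `Ω ⊆ X` open
convex with `0 ∈ Ω`, `p = gauge Ω` its Minkowski functional, and
`f(y) = sup {t : y + t h ∈ Ω}` the finite concave upper-slice function on `Ω_h`, whose
graph lies in `∂Ω`. If `f` is Gâteaux differentiable at `y₀ ∈ Ω_h`, with Gâteaux
derivative `L = D_G f(y₀)` (along directions of `Y`), and `x₀ = y₀ + f(y₀) h`, then `p`
is Gâteaux differentiable at `x₀` with Gâteaux derivative
`x = y + t h ↦ ((−L)(y) + t) / ((−L)(y₀) + f(y₀))`, where `y = x − h*(x) h`,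
`t = h*(x)`. -/
theorem gauge_gateaux_derivative_at_graph_point
    {X : Type*} [NormedAddCommGroup X] [NormedSpace ℝ X]
    (hstar : X →L[ℝ] ℝ) (h : X) (hh : hstar h = 1)
    (Ω : Set X) (hΩopen : IsOpen Ω) (hΩconv : Convex ℝ Ω) (h0 : (0 : X) ∈ Ω)
    (hfin : ∀ y : X, (hstar y = 0 ∧ ∃ t : ℝ, y + t • h ∈ Ω) →
      BddAbove {t : ℝ | y + t • h ∈ Ω})
    (y₀ : X) (hy₀ : hstar y₀ = 0 ∧ ∃ t : ℝ, y₀ + t • h ∈ Ω)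
    (L : X →L[ℝ] ℝ)
    (hGateaux : ∀ v : X, hstar v = 0 →
      HasDerivAt (fun t : ℝ => sSup {s : ℝ | (y₀ + t • v) + s • h ∈ Ω}) (L v) 0) :
    ∀ v : X, HasDerivAt
      (fun s : ℝ => gauge Ω ((y₀ + sSup {t : ℝ | y₀ + t • h ∈ Ω} • h) + s • v))
      ((-(L (v - hstar v • h)) + hstar v) /
        (-(L y₀) + sSup {t : ℝ | y₀ + t • h ∈ Ω})) 0 := by
  intro v
  obtain ⟨hy₀Y, ty, hty⟩ := hy₀
  change HasDerivAt (fun s : ℝ => gauge Ω ((y₀ + sliceSup Ω h y₀ • h) + s • v))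
    ((-(L (v - hstar v • h)) + hstar v) / (-(L y₀) + sliceSup Ω h y₀)) 0
  have hbdd : ∀ y, hstar y = 0 → BddAbove {t : ℝ | y + t • h ∈ Ω} := fun y hy =>
    (eq_empty_or_nonempty {t : ℝ | y + t • h ∈ Ω}).elim (fun he => he ▸ bddAbove_empty)
      fun hne => hfin y ⟨hy, hne⟩
  have hΩ0 : Ω ∈ 𝓝 0 := hΩopen.mem_nhds h0
  set φ := tangentFunctional hstar L h
  have hφ_le : ∀ x ∈ Ω, φ x ≤ sliceSup Ω h y₀ - L y₀ := fun x hx =>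
    hΩconv.tangentFunctional_le hh hy₀Y ⟨ty, hty⟩ hbdd hGateaux hx
  have hM : 0 < sliceSup Ω h y₀ - L y₀ := hΩopen.pos_of_forall_tangentFunctional_le h0 hh hφ_le
  have hlow := one_add_mul_le_gauge_add_smul (absorbent_nhds_zero hΩ0) φ.toLinearMap hM hφ_le
    (tangentFunctional_add_smul L hh hy₀Y _) v
  have hx₀ : gauge Ω (y₀ + sliceSup Ω h y₀ • h) = 1 :=
    le_antisymm (gauge_add_sliceSup_smul_le_one hΩconv hΩ0 ⟨ty, hty⟩ (hbdd y₀ hy₀Y))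
      (by simpa using hlow 0)
  have hup := eventually_gauge_le_of_tangentFunctional hΩopen hΩconv hh hy₀Y hty
    (hΩopen.lt_sliceSup (hbdd y₀ hy₀Y) hty) hM hGateaux v
  refine (hasDerivAt_of_le_of_eventually_le
    (g := fun s => gauge Ω ((y₀ + sliceSup Ω h y₀ • h) + s • v))
    (c := φ v / (sliceSup Ω h y₀ - L y₀)) ?_ ?_).congr_deriv ?_
  · simpa only [zero_smul, add_zero, hx₀, ContinuousLinearMap.coe_coe] using hlow
  · simpa only [zero_smul, add_zero, hx₀] using hup
  · simp only [φ, tangentFunctional_apply]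
    ring
end

section
/- Let X = Y ⊕ ℝh, Ω ⊆ X open convex, with slice functions g (convex, finite) and f (concave, finite) on Ω_h, so that Ω = {y + t h : y ∈ Ω_h, g(y) < t < f(y)}. Then the topological boundary of Ω decomposes as ∂Ω = Γ(f, Ω_h) ∪ Γ(g, Ω_h) ∪ N where Γ(f, Ω_h) = {y + f(y)h : y ∈ Ω_h}, Γ(g, Ω_h) = {y + g(y)h : y ∈ Ω_h}, N = ∂Ω ∩ ∂C with C = Ω_h ⊕ ℝh, and the three sets are pairwise disjoint. Moreover ∂Ω ∩ C = Γ(f, Ω_h) ∪ Γ(g, Ω_h). -/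
/-!
Each line `t ↦ y + t • h` meets the open convex set `Ω` in an open convex subset of `ℝ`, i.e. in
the interval `(g y, f y)`. For an open convex set, pulling back along an affine map that hits it
commutes with taking the frontier, because the open segment from a point of `Ω` to a point of
`closure Ω` lies in `Ω`. So on the cylinder `C` the frontier of `Ω` is exactly the two graphs,
which are disjoint since `g < f`; off `C`, a frontier point of `Ω ⊆ C` lies in the frontier of
the open set `C`.
-/

open Set Pointwise

theorem IsOpen.eq_Ioo_csInf_csSup {α : Type*} [ConditionallyCompleteLinearOrder α]
    [TopologicalSpace α] [OrderTopology α] [DenselyOrdered α] [NoMinOrder α] [NoMaxOrder α]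
    {s : Set α} (hs : IsOpen s) (hc : IsConnected s) (hb : BddBelow s) (ha : BddAbove s) :
    s = Ioo (sInf s) (sSup s) := by
  refine (hc.Ioo_csInf_csSup_subset hb ha).antisymm' ?_
  calc s = interior s := hs.interior_eq.symm
    _ ⊆ interior (Icc (sInf s) (sSup s)) := interior_mono (subset_Icc_csInf_csSup hb ha)
    _ = Ioo (sInf s) (sSup s) := interior_Icc

theorem frontier_eq_inter_union_inter_frontier {X : Type*} [TopologicalSpace X] {s C : Set X}
    (hC : IsOpen C) (hsC : s ⊆ C) :
    frontier s = frontier s ∩ C ∪ frontier s ∩ frontier C := by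
  refine Subset.antisymm (fun x hx => ?_) (union_subset inter_subset_left inter_subset_left)
  by_cases hxC : x ∈ C
  · exact Or.inl ⟨hx, hxC⟩
  · rw [hC.frontier_eq]
    exact Or.inr ⟨hx, closure_mono hsC (frontier_subset_closure hx), hxC⟩

theorem Convex.preimage_frontier_eq_frontier_preimage
    {E F : Type*} [AddCommGroup E] [Module ℝ E] [TopologicalSpace E] [ContinuousAdd E]
    [ContinuousSMul ℝ E] [AddCommGroup F] [Module ℝ F] [TopologicalSpace F]
    [IsTopologicalAddGroup F] [ContinuousConstSMul ℝ F]
    {s : Set F} (hs : Convex ℝ s) (hso : IsOpen s) (f : E →ᵃ[ℝ] F) (hf : Continuous f)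
    (hne : (f ⁻¹' s).Nonempty) : f ⁻¹' frontier s = frontier (f ⁻¹' s) := by
  suffices f ⁻¹' closure s = closure (f ⁻¹' s) by
    rw [hso.frontier_eq, (hso.preimage hf).frontier_eq, preimage_sdiff, this]
  refine Subset.antisymm (fun x hx => ?_) (hf.closure_preimage_subset s)
  obtain ⟨z, hz⟩ := hne
  have hseg : openSegment ℝ z x ⊆ f ⁻¹' s := by
    rw [← image_subset_iff, image_openSegment, ← hso.interior_eq]
    exact hs.openSegment_interior_closure_subset_interior (by rwa [hso.interior_eq]) hx
  exact closure_mono hseg (segment_subset_closure_openSegment (right_mem_segment ℝ z x))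

theorem AffineMap.coe_lineMap_add {X : Type*} [AddCommGroup X] [Module ℝ X] (y h : X) :
    ⇑(AffineMap.lineMap y (y + h) : ℝ →ᵃ[ℝ] X) = fun t : ℝ => y + t • h := by
  funext t
  simp [AffineMap.lineMap_apply_module', add_comm]

section Slices

variable {X : Type*} [AddCommGroup X] [Module ℝ X] [TopologicalSpace X] [IsTopologicalAddGroup X]
  [ContinuousSMul ℝ X] {Ω : Set X} {y h : X}

theorem setOf_add_smul_mem_eq_Ioo (hΩo : IsOpen Ω) (hΩc : Convex ℝ Ω)
    (hne : ∃ t : ℝ, y + t • h ∈ Ω) (hb : BddBelow {t : ℝ | y + t • h ∈ Ω})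
    (ha : BddAbove {t : ℝ | y + t • h ∈ Ω}) :
    {t : ℝ | y + t • h ∈ Ω} =
      Ioo (sInf {t : ℝ | y + t • h ∈ Ω}) (sSup {t : ℝ | y + t • h ∈ Ω}) := by
  have hconv := hΩc.affine_preimage (AffineMap.lineMap y (y + h))
  rw [AffineMap.coe_lineMap_add] at hconv
  exact IsOpen.eq_Ioo_csInf_csSup (hΩo.preimage (by fun_prop)) ⟨hne, hconv.isPreconnected⟩ hb ha

theorem add_smul_mem_frontier_iff (hΩo : IsOpen Ω) (hΩc : Convex ℝ Ω)
    (hne : ∃ t : ℝ, y + t • h ∈ Ω) (hb : BddBelow {t : ℝ | y + t • h ∈ Ω})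
    (ha : BddAbove {t : ℝ | y + t • h ∈ Ω}) {t : ℝ} :
    y + t • h ∈ frontier Ω ↔
      t = sInf {t : ℝ | y + t • h ∈ Ω} ∨ t = sSup {t : ℝ | y + t • h ∈ Ω} := by
  have hfr := hΩc.preimage_frontier_eq_frontier_preimage hΩo (AffineMap.lineMap y (y + h))
    AffineMap.lineMap_continuous (by rwa [AffineMap.coe_lineMap_add])
  rw [AffineMap.coe_lineMap_add] at hfr
  change (fun t : ℝ => y + t • h) ⁻¹' frontier Ω = frontier {t : ℝ | y + t • h ∈ Ω} at hfr
  have hIoo := setOf_add_smul_mem_eq_Ioo hΩo hΩc hne hb ha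
  rw [hIoo, frontier_Ioo (nonempty_Ioo.1 (hIoo ▸ hne))] at hfr
  exact Set.ext_iff.1 hfr t

end Slices

-- `projAlong φ h Ω` and `cylinderAlong φ h Ω` are the paper's `Ω_h` and `C`.
def projAlong {X : Type*} [AddCommGroup X] [Module ℝ X] [TopologicalSpace X]
    (φ : X →L[ℝ] ℝ) (h : X) (Ω : Set X) : Set X :=
  {y : X | φ y = 0 ∧ ∃ t : ℝ, y + t • h ∈ Ω}

def cylinderAlong {X : Type*} [AddCommGroup X] [Module ℝ X] [TopologicalSpace X]
    (φ : X →L[ℝ] ℝ) (h : X) (Ω : Set X) : Set X :=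
  {x : X | ∃ y ∈ projAlong φ h Ω, ∃ t : ℝ, x = y + t • h}

section Cylinder

variable {X : Type*} [AddCommGroup X] [Module ℝ X] [TopologicalSpace X] {φ : X →L[ℝ] ℝ} {h : X}
  {Ω : Set X}

theorem cylinderAlong_eq_add_range (hh : φ h = 1) :
    cylinderAlong φ h Ω = Ω + range (fun t : ℝ => t • h) := by
  ext x
  constructor
  · rintro ⟨y, ⟨-, s, hs⟩, t, rfl⟩
    exact ⟨y + s • h, hs, (t - s) • h, ⟨t - s, rfl⟩, by module⟩
  · rintro ⟨w, hw, _, ⟨r, rfl⟩, rfl⟩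
    exact ⟨w - φ w • h, ⟨by simp [hh], φ w, by simpa using hw⟩, φ w + r, by module⟩

theorem isOpen_cylinderAlong [IsTopologicalAddGroup X] (hh : φ h = 1) (hΩ : IsOpen Ω) :
    IsOpen (cylinderAlong φ h Ω) := by
  rw [cylinderAlong_eq_add_range hh]
  exact hΩ.add_right

theorem subset_cylinderAlong (hh : φ h = 1) : Ω ⊆ cylinderAlong φ h Ω := by
  rw [cylinderAlong_eq_add_range hh]
  exact subset_add_left Ω ⟨0, zero_smul ℝ h⟩

theorem disjoint_image_add_smul (hh : φ h = 1) {A : Set X} (hA : ∀ y ∈ A, φ y = 0)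
    {f g : X → ℝ} (hgf : ∀ y ∈ A, g y < f y) :
    Disjoint ((fun y => y + f y • h) '' A) ((fun y => y + g y • h) '' A) := by
  rw [disjoint_left]
  rintro _ ⟨y, hy, rfl⟩ ⟨y', hy', heq⟩
  dsimp only at heq
  have hval : g y' = f y := by simpa [hA y hy, hA y' hy', hh] using congrArg φ heq
  rw [hval, add_left_inj] at heq
  subst heq
  exact (hgf y' hy).ne hval

end Cylinder

theorem boundary_decomposition_of_open_convex_general
    {X : Type*} [NormedAddCommGroup X] [NormedSpace ℝ X]
    (hstar : X →L[ℝ] ℝ) (h : X) (hh : hstar h = 1)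
    (Ω : Set X) (hΩopen : IsOpen Ω) (hΩconv : Convex ℝ Ω)
    (hbddAbove : ∀ y : X, (hstar y = 0 ∧ ∃ t : ℝ, y + t • h ∈ Ω) →
      BddAbove {t : ℝ | y + t • h ∈ Ω})
    (hbddBelow : ∀ y : X, (hstar y = 0 ∧ ∃ t : ℝ, y + t • h ∈ Ω) →
      BddBelow {t : ℝ | y + t • h ∈ Ω}) :
    let Ωh : Set X := {y : X | hstar y = 0 ∧ ∃ t : ℝ, y + t • h ∈ Ω}
    let f : X → ℝ := fun y => sSup {t : ℝ | y + t • h ∈ Ω}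
    let g : X → ℝ := fun y => sInf {t : ℝ | y + t • h ∈ Ω}
    let Γf : Set X := (fun y => y + f y • h) '' Ωh
    let Γg : Set X := (fun y => y + g y • h) '' Ωh
    let C : Set X := {x : X | ∃ y ∈ Ωh, ∃ t : ℝ, x = y + t • h}
    let N : Set X := frontier Ω ∩ frontier C
    frontier Ω = Γf ∪ Γg ∪ N ∧
      Disjoint Γf Γg ∧ Disjoint Γf N ∧ Disjoint Γg N ∧
      frontier Ω ∩ C = Γf ∪ Γg := by
  intro Ωh f g Γf Γg C N
  have hfrontier (y : X) (hy : y ∈ Ωh) (t : ℝ) : y + t • h ∈ frontier Ω ↔ t = g y ∨ t = f y :=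
    add_smul_mem_frontier_iff hΩopen hΩconv hy.2 (hbddBelow y hy) (hbddAbove y hy)
  have hgf (y : X) (hy : y ∈ Ωh) : g y < f y := by
    have hIoo := setOf_add_smul_mem_eq_Ioo hΩopen hΩconv hy.2 (hbddBelow y hy) (hbddAbove y hy)
    exact nonempty_Ioo.1 (hIoo ▸ hy.2)
  have hC : IsOpen C := isOpen_cylinderAlong hh hΩopen
  have hΓC : Γf ∪ Γg ⊆ C := by
    rintro _ (⟨y, hy, rfl⟩ | ⟨y, hy, rfl⟩) <;> exact ⟨y, hy, _, rfl⟩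
  have hCN : Disjoint C N := (disjoint_frontier_iff_isOpen.2 hC).symm.mono_right inter_subset_right
  have hinter : frontier Ω ∩ C = Γf ∪ Γg := by
    refine Subset.antisymm ?_ fun x hx => ⟨?_, hΓC hx⟩
    · rintro _ ⟨hx, y, hy, t, rfl⟩
      rcases (hfrontier y hy t).1 hx with rfl | rfl
      exacts [Or.inr ⟨y, hy, rfl⟩, Or.inl ⟨y, hy, rfl⟩]
    · rcases hx with ⟨y, hy, rfl⟩ | ⟨y, hy, rfl⟩
      exacts [(hfrontier y hy _).2 (Or.inr rfl), (hfrontier y hy _).2 (Or.inl rfl)]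
  refine ⟨?_, disjoint_image_add_smul hh (fun y hy => hy.1) hgf,
    hCN.mono_left (subset_union_left.trans hΓC), hCN.mono_left (subset_union_right.trans hΓC),
    hinter⟩
  rw [← hinter]
  exact frontier_eq_inter_union_inter_frontier hC (subset_cylinderAlong hh)

/-- Let `Ω ⊆ X = Y ⊕ ℝh` (`Y = ker h*`, `h*(h) = 1`) be a nonempty open
convex set with finite slice functions `g(y) = inf {t : y + t h ∈ Ω}` (convex) and
`f(y) = sup {t : y + t h ∈ Ω}` (concave) on `Ω_h = {y ∈ Y : ∃ t, y + t h ∈ Ω}`. Let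
`Γ(f, Ω_h) = {y + f(y) h : y ∈ Ω_h}`, `Γ(g, Ω_h) = {y + g(y) h : y ∈ Ω_h}`, let
`C = Ω_h ⊕ ℝh` be the open cylinder over `Ω_h`, and `N = ∂Ω ∩ ∂C`. Then
`∂Ω = Γ(f, Ω_h) ∪ Γ(g, Ω_h) ∪ N`, the three sets are pairwise disjoint, and
`∂Ω ∩ C = Γ(f, Ω_h) ∪ Γ(g, Ω_h)`. -/
theorem boundary_decomposition_of_open_convex
    {X : Type*} [NormedAddCommGroup X] [NormedSpace ℝ X]
    (hstar : X →L[ℝ] ℝ) (h : X) (hh : hstar h = 1)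
    (Ω : Set X) (hΩopen : IsOpen Ω) (hΩconv : Convex ℝ Ω) (hΩne : Ω.Nonempty)
    (hbddAbove : ∀ y : X, (hstar y = 0 ∧ ∃ t : ℝ, y + t • h ∈ Ω) →
      BddAbove {t : ℝ | y + t • h ∈ Ω})
    (hbddBelow : ∀ y : X, (hstar y = 0 ∧ ∃ t : ℝ, y + t • h ∈ Ω) →
      BddBelow {t : ℝ | y + t • h ∈ Ω}) :
    let Ωh : Set X := {y : X | hstar y = 0 ∧ ∃ t : ℝ, y + t • h ∈ Ω}
    let f : X → ℝ := fun y => sSup {t : ℝ | y + t • h ∈ Ω}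
    let g : X → ℝ := fun y => sInf {t : ℝ | y + t • h ∈ Ω}
    let Γf : Set X := (fun y => y + f y • h) '' Ωh
    let Γg : Set X := (fun y => y + g y • h) '' Ωh
    let C : Set X := {x : X | ∃ y ∈ Ωh, ∃ t : ℝ, x = y + t • h}
    let N : Set X := frontier Ω ∩ frontier C
    frontier Ω = Γf ∪ Γg ∪ N ∧
      Disjoint Γf Γg ∧ Disjoint Γf N ∧ Disjoint Γg N ∧
      frontier Ω ∩ C = Γf ∪ Γg :=
  boundary_decomposition_of_open_convex_general hstar h hh Ω hΩopen hΩconv hbddAbove hbddBelow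
end
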